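/- Let W be a nonnegative real random variable with 0<E[W]<∞ and E[W³]<∞, let q≥3 be an integer, fix B=0, and for β>0 write β'=e^β−1 and p_{β,0}(s)=E[log(e^{β'Ws}+q−1)] − (β'·E[W]/(2q))·[(q−1)s²+2s−1] for s∈[0,1]. Define 𝓕_0(t)=E[(W/E[W])·(e^{tW}−1)/(e^{tW}+q−1)] and t_conv = sup{s>0 : 𝓕_0 is convex on (0,s)}; then t_conv>0. There exists a critical value β_c∈(0,∞) such that: for every β∈(0,β_c), s=0 is the unique maximizer of p_{β,0} on [0,1]; and for every β>β_c, every maximizer s of p_{β,0} on [0,1] satisfies s ≥ t_conv/β' > 0. In particular β↦s*(β,0) (the optimal value) makes a jump at β_c, i.e., the annealed Potts model has a first-order phase transition at β_c. -/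

import Mathlib

open MeasureTheory Filter Topology Set

/-- The function `𝓕_0(t) = E[(W/E[W])·(e^{tW}−1)/(e^{tW}+q−1)]`. -/
noncomputable def Ffun {Ω : Type*} [MeasurableSpace Ω] (μ : Measure Ω)
    (W : Ω → ℝ) (q : ℕ) (t : ℝ) : ℝ :=
  ∫ ω, (W ω / (∫ ω', W ω' ∂μ)) * (Real.exp (t * W ω) - 1) /
    (Real.exp (t * W ω) + q - 1) ∂μ

/-- The reduced zero-field pressure functional
`p_{β,0}(s) = E[log(e^{β'Ws}+q−1)] − (β'E[W]/(2q))·[(q−1)s²+2s−1]`, `β'=e^β−1`. -/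
noncomputable def pfun {Ω : Type*} [MeasurableSpace Ω] (μ : Measure Ω)
    (W : Ω → ℝ) (q : ℕ) (β : ℝ) (s : ℝ) : ℝ :=
  (∫ ω, Real.log (Real.exp ((Real.exp β - 1) * W ω * s) + q - 1) ∂μ)
    - (Real.exp β - 1) * (∫ ω, W ω ∂μ) / (2 * q) * ((q - 1) * s ^ 2 + 2 * s - 1)

/-- The threshold `t_conv = sup{s > 0 : 𝓕_0 is convex on (0,s)}`. -/
noncomputable def tconv {Ω : Type*} [MeasurableSpace Ω] (μ : Measure Ω)
    (W : Ω → ℝ) (q : ℕ) : ℝ :=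
  sSup {s : ℝ | 0 < s ∧ ConvexOn ℝ (Ioo 0 s) (Ffun μ W q)}

/-!
Write `b = e^β - 1`, `Φ(t) = E[log(e^{tW} + q - 1)]` and `σ(x) = e^x / (e^x + q - 1)`, so that
`Φ'(t) = E[W σ(tW)]` and `𝓕_0` is an affine function of `Φ'` with positive slope.

For `s > 0` the gap `p_{β,0}(s) - p_{β,0}(0) = Φ(bs) - log q - b c(s)` is strictly convex in `b`
(as `Φ'` is strictly increasing) and vanishes at `b = 0`; hence once it is nonnegative it stays
positive for all larger `b`. So `β_c` is the supremum of those `β` for which the gap is negative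
for every `s ∈ (0,1]`: this set is nonempty by the second-order bound
`Φ(t) ≤ log q + t E[W]/q + t² E[W²]/2`, and bounded since `Φ(t) ≥ t E[W]`.

Near `0`, `𝓕_0''` is a positive multiple of `E[W³ σ''(tW)]`, which at `t = 0` equals
`σ''(0) E[W³] > 0` exactly because `q > 2`; so `𝓕_0` is convex near `0` and `t_conv > 0`.

For `β > β_c` a maximizer `s` beats `0`, so `𝓕_0(b x) > x` for some `x < s` (otherwise
`p_{β,0}` decreases on `[0, s]`), while the first-order condition gives `𝓕_0(b s) ≤ s`.
If `b s < t_conv`, convexity of `𝓕_0` with `𝓕_0(0) = 0` makes `𝓕_0(t)/t` nondecreasing on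
`(0, b s]`, forcing `𝓕_0(b s) > s`.
-/

open Real

section ExpSigmoid

variable {a x : ℝ}

-- `e^x / (e^x + a)` for `a > 0`, written via `Real.sigmoid` to inherit `σ' = σ (1 - σ)`.
noncomputable def expSigmoid (a x : ℝ) : ℝ := sigmoid (x - log a)

noncomputable def expSigmoidDeriv (a x : ℝ) : ℝ := expSigmoid a x * (1 - expSigmoid a x)

noncomputable def expSigmoidDeriv2 (a x : ℝ) : ℝ := expSigmoidDeriv a x * (1 - 2 * expSigmoid a x)

lemma expSigmoid_eq (ha : 0 < a) (x : ℝ) : expSigmoid a x = exp x / (exp x + a) := by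
  rw [expSigmoid, sigmoid_def, neg_sub, exp_sub, exp_log ha]
  field_simp

lemma expSigmoid_zero (ha : 0 < a) : expSigmoid a 0 = (1 + a)⁻¹ := by
  rw [expSigmoid_eq ha, exp_zero, one_div]

lemma hasDerivAt_log_exp_add (ha : 0 < a) (x : ℝ) :
    HasDerivAt (fun x => log (exp x + a)) (expSigmoid a x) x := by
  rw [expSigmoid_eq ha]
  exact ((hasDerivAt_exp x).add_const a).log (by positivity)

lemma hasDerivAt_expSigmoid (x : ℝ) : HasDerivAt (expSigmoid a) (expSigmoidDeriv a x) x :=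
  (hasDerivAt_sigmoid (x - log a)).comp_sub_const x (log a)

lemma hasDerivAt_expSigmoidDeriv (x : ℝ) :
    HasDerivAt (expSigmoidDeriv a) (expSigmoidDeriv2 a x) x := by
  have h := hasDerivAt_expSigmoid (a := a) x
  refine (h.mul (h.const_sub 1)).congr_deriv ?_
  simp only [expSigmoidDeriv2, expSigmoidDeriv]
  ring

lemma abs_expSigmoid_le_one (x : ℝ) : |expSigmoid a x| ≤ 1 := by
  rw [abs_le, expSigmoid]
  constructor <;> linarith [sigmoid_pos (x - log a), sigmoid_le_one (x - log a)]

lemma expSigmoidDeriv_pos (x : ℝ) : 0 < expSigmoidDeriv a x :=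
  mul_pos (sigmoid_pos _) (sub_pos.2 (sigmoid_lt_one _))

lemma abs_expSigmoidDeriv_le_one (x : ℝ) : |expSigmoidDeriv a x| ≤ 1 := by
  have h₀ := sigmoid_pos (x - log a)
  have h₁ := sigmoid_lt_one (x - log a)
  rw [abs_of_pos (expSigmoidDeriv_pos x), expSigmoidDeriv, expSigmoid]
  nlinarith

lemma abs_expSigmoidDeriv2_le_one (x : ℝ) : |expSigmoidDeriv2 a x| ≤ 1 := by
  have h₀ := sigmoid_pos (x - log a)
  have h₁ := sigmoid_lt_one (x - log a)
  rw [expSigmoidDeriv2, abs_mul]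
  refine mul_le_one₀ (abs_expSigmoidDeriv_le_one x) (abs_nonneg _) (abs_le.2 ⟨?_, ?_⟩) <;>
    rw [expSigmoid] <;> linarith

lemma expSigmoidDeriv2_zero_pos (ha : 1 < a) : 0 < expSigmoidDeriv2 a 0 := by
  refine mul_pos (expSigmoidDeriv_pos 0) ?_
  have : expSigmoid a 0 < 2⁻¹ := by
    rw [expSigmoid, ← sigmoid_zero]
    exact sigmoid_lt (by linarith [log_pos ha])
  linarith

lemma expSigmoid_le_add (ha : 0 < a) (hx : 0 ≤ x) : expSigmoid a x ≤ (1 + a)⁻¹ + x := by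
  have h := image_sub_le_mul_sub_of_deriv_le (f := expSigmoid a) (C := 1)
    (fun y => (hasDerivAt_expSigmoid y).differentiableAt)
    (fun y => (hasDerivAt_expSigmoid y).deriv ▸ (abs_le.1 (abs_expSigmoidDeriv_le_one y)).2) hx
  rw [expSigmoid_zero ha] at h
  linarith

lemma log_exp_add_le (ha : 0 < a) (hx : 0 ≤ x) :
    log (exp x + a) ≤ log (1 + a) + x * (1 + a)⁻¹ + x ^ 2 / 2 := by
  let g := fun y => log (1 + a) + y * (1 + a)⁻¹ + y ^ 2 / 2 - log (exp y + a)
  have hg : ∀ y, HasDerivAt g ((1 + a)⁻¹ + y - expSigmoid a y) y := fun y => by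
    refine ((((hasDerivAt_id y).mul_const (1 + a)⁻¹).const_add (log (1 + a))).add
      ((hasDerivAt_pow 2 y).div_const 2)).sub (hasDerivAt_log_exp_add ha y) |>.congr_deriv ?_
    norm_num
  have hmono : MonotoneOn g (Ici 0) := by
    refine monotoneOn_of_deriv_nonneg (convex_Ici 0)
      (fun y _ => (hg y).continuousAt.continuousWithinAt)
      (fun y _ => (hg y).differentiableAt.differentiableWithinAt) fun y hy => ?_
    rw [interior_Ici] at hy
    rw [(hg y).deriv]
    linarith [expSigmoid_le_add ha (le_of_lt hy)]
  have h := hmono self_mem_Ici hx hx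
  simp only [g, exp_zero, zero_mul, add_zero] at h
  norm_num at h
  linarith

lemma le_log_exp_add (ha : 0 ≤ a) (x : ℝ) : x ≤ log (exp x + a) := by
  calc x = log (exp x) := (log_exp x).symm
    _ ≤ log (exp x + a) := log_le_log (exp_pos x) (by linarith)

end ExpSigmoid

section ScaledMoment

variable {Ω : Type*} [MeasurableSpace Ω] {μ : Measure Ω} {W : Ω → ℝ}

noncomputable def scaledMoment (μ : Measure Ω) (W : Ω → ℝ) (k : ℕ) (g : ℝ → ℝ) (t : ℝ) : ℝ :=
  ∫ ω, W ω ^ k * g (t * W ω) ∂μ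

lemma integrable_pow_of_le [IsFiniteMeasure μ] (hW : AEStronglyMeasurable W μ)
    (hW₀ : ∀ ω, 0 ≤ W ω) {k n : ℕ} (hkn : k ≤ n) (hn : Integrable (fun ω => W ω ^ n) μ) :
    Integrable (fun ω => W ω ^ k) μ := by
  refine ((integrable_const 1).add hn).mono' (hW.pow k) (ae_of_all _ fun ω => ?_)
  rw [Real.norm_of_nonneg (pow_nonneg (hW₀ ω) k), Pi.add_apply]
  rcases le_total (W ω) 1 with h | h
  · linarith [pow_le_one₀ (hW₀ ω) h (n := k), pow_nonneg (hW₀ ω) n]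
  · linarith [pow_le_pow_right₀ h hkn]

lemma measure_support_pos_of_integral_pos {f : Ω → ℝ} (hf : 0 < ∫ ω, f ω ∂μ) :
    0 < μ (Function.support f) := by
  refine pos_iff_ne_zero.2 fun h => hf.ne' (integral_eq_zero_of_ae ?_)
  exact ae_iff.2 h

lemma integral_pos_of_support_subset {f g : Ω → ℝ} (hf : 0 ≤ f) (hfi : Integrable f μ)
    (hg : 0 < ∫ ω, g ω ∂μ) (hgf : Function.support g ⊆ Function.support f) :
    0 < ∫ ω, f ω ∂μ :=
  (integral_pos_iff_support_of_nonneg hf hfi).2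
    ((measure_support_pos_of_integral_pos hg).trans_le (measure_mono hgf))

variable {g g' : ℝ → ℝ} {C : ℝ} {k : ℕ}

lemma integrable_pow_mul_comp (hg : ∀ x, HasDerivAt g (g' x) x) (hC : ∀ x, |g' x| ≤ C)
    (hW : AEStronglyMeasurable W μ) (hk : Integrable (fun ω => W ω ^ k) μ)
    (hk₁ : Integrable (fun ω => W ω ^ (k + 1)) μ) (t : ℝ) :
    Integrable (fun ω => W ω ^ k * g (t * W ω)) μ := by
  have hg_cont : Continuous g := continuous_iff_continuousAt.2 fun x => (hg x).continuousAt
  have hlip : ∀ x, |g x| ≤ |g 0| + C * |x| := fun x => by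
    have := convex_univ.norm_image_sub_le_of_norm_hasDerivWithin_le
      (fun y _ => (hg y).hasDerivWithinAt) (fun y _ => hC y) (mem_univ 0) (mem_univ x)
    simp only [Real.norm_eq_abs, sub_zero] at this
    linarith [abs_sub_abs_le_abs_sub (g x) (g 0)]
  refine ((hk.norm.const_mul |g 0|).add (hk₁.norm.const_mul (C * |t|))).mono'
    (hW.pow k |>.mul (hg_cont.comp_aestronglyMeasurable (hW.const_mul t)))
    (ae_of_all _ fun ω => ?_)
  have hC₀ : 0 ≤ C := (abs_nonneg _).trans (hC 0)
  simp only [Real.norm_eq_abs, abs_mul, pow_succ, Pi.add_apply]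
  calc |W ω ^ k| * |g (t * W ω)| ≤ |W ω ^ k| * (|g 0| + C * (|t| * |W ω|)) := by
        rw [← abs_mul t]
        exact mul_le_mul_of_nonneg_left (hlip _) (abs_nonneg _)
    _ = _ := by ring

lemma hasDerivAt_scaledMoment (hg : ∀ x, HasDerivAt g (g' x) x) (hC : ∀ x, |g' x| ≤ C)
    (hW : AEStronglyMeasurable W μ) (hk : Integrable (fun ω => W ω ^ k) μ)
    (hk₁ : Integrable (fun ω => W ω ^ (k + 1)) μ) (t : ℝ) :
    HasDerivAt (scaledMoment μ W k g) (scaledMoment μ W (k + 1) g' t) t := by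
  have hg' : Measurable g' := by
    rw [show g' = deriv g from funext fun x => (hg x).deriv.symm]
    exact measurable_deriv g
  refine (hasDerivAt_integral_of_dominated_loc_of_deriv_le (bound := fun ω => C * |W ω ^ (k + 1)|)
    (F' := fun x ω => W ω ^ (k + 1) * g' (x * W ω))
    univ_mem (Eventually.of_forall fun x =>
      (integrable_pow_mul_comp hg hC hW hk hk₁ x).aestronglyMeasurable)
    (integrable_pow_mul_comp hg hC hW hk hk₁ t)
    ((hW.pow (k + 1)).mul
      (hg'.comp_aemeasurable (hW.aemeasurable.const_mul t)).aestronglyMeasurable)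
    (ae_of_all _ fun ω x _ => ?_) (hk₁.norm.const_mul C) (ae_of_all _ fun ω x _ => ?_)).2
  · rw [Real.norm_eq_abs, abs_mul, mul_comm]
    exact mul_le_mul_of_nonneg_right (hC _) (abs_nonneg _)
  · refine (((hg (x * W ω)).comp x (hasDerivAt_mul_const (W ω))).const_mul (W ω ^ k)).congr_deriv ?_
    ring

lemma continuous_scaledMoment [IsFiniteMeasure μ] (hg : Continuous g) (hC : ∀ x, |g x| ≤ C)
    (hW : AEStronglyMeasurable W μ) (hk : Integrable (fun ω => W ω ^ k) μ) :
    Continuous (scaledMoment μ W k g) :=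
  continuous_of_dominated
    (fun t => (hW.pow k).mul (hg.comp_aestronglyMeasurable (hW.const_mul t)))
    (fun t => ae_of_all _ fun ω => by
      rw [Real.norm_eq_abs, abs_mul, mul_comm]
      exact mul_le_mul_of_nonneg_right (hC _) (abs_nonneg _))
    (hk.norm.const_mul C)
    (ae_of_all _ fun ω => continuous_const.mul (hg.comp (continuous_id.mul continuous_const)))

end ScaledMoment

lemma ConvexOn.monotoneOn_div_self {G : ℝ → ℝ} {c : ℝ} (hG : ConvexOn ℝ (Ioo 0 c) G)
    (hG₀ : Tendsto G (𝓝[>] 0) (𝓝 0)) : MonotoneOn (fun x => G x / x) (Ioo 0 c) := by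
  intro x hx y hy hxy
  have hsecant : ∀ᶠ ε in 𝓝[>] 0, (G x - G ε) / (x - ε) ≤ (G y - G ε) / (y - ε) := by
    filter_upwards [Ioo_mem_nhdsGT hx.1] with ε hε
    exact hG.secant_mono ⟨hε.1, hε.2.trans hx.2⟩ hx hy hε.2.ne' (hε.2.trans_le hxy).ne' hxy
  have hlim : ∀ z ≠ 0, Tendsto (fun ε => (G z - G ε) / (z - ε)) (𝓝[>] 0) (𝓝 (G z / z)) :=
    fun z hz => by
      have hnum : Tendsto (fun ε => G z - G ε) (𝓝[>] 0) (𝓝 (G z - 0)) :=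
        tendsto_const_nhds.sub hG₀
      have hden : Tendsto (fun ε => z - ε) (𝓝[>] 0) (𝓝 (z - 0)) :=
        tendsto_const_nhds.sub (tendsto_id.mono_left nhdsWithin_le_nhds)
      have h := hnum.div hden (by simpa using hz)
      rwa [sub_zero, sub_zero] at h
  exact le_of_tendsto_of_tendsto (hlim x hx.1.ne') (hlim y hy.1.ne') hsecant

lemma StrictConvexOn.pos_of_lt_of_nonneg {f : ℝ → ℝ} (hf : StrictConvexOn ℝ (Ici 0) f)
    (h₀ : f 0 = 0) {x y : ℝ} (hx : 0 < x) (hxy : x < y) (hfx : 0 ≤ f x) : 0 < f y := by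
  have hy : 0 < y := hx.trans hxy
  have h := hf.2 self_mem_Ici (mem_Ici.2 hy.le) hy.ne (sub_pos.2 ((div_lt_one hy).2 hxy))
    (div_pos hx hy) (sub_add_cancel 1 (x / y))
  simp only [smul_eq_mul, mul_zero, zero_add, h₀, div_mul_cancel₀ x hy.ne'] at h
  by_contra! hneg
  nlinarith [div_pos hx hy]

structure AdmissibleWeight {Ω : Type*} [MeasurableSpace Ω] (μ : Measure Ω) (W : Ω → ℝ) :
    Prop where
  measurable : Measurable W
  nonneg : ∀ ω, 0 ≤ W ω
  integrable_pow_three : Integrable (fun ω => W ω ^ 3) μ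
  integral_pos : 0 < ∫ ω, W ω ∂μ

section Formulas

variable {Ω : Type*} [MeasurableSpace Ω] {μ : Measure Ω} {W : Ω → ℝ} {q : ℕ}

lemma scaledMoment_expSigmoid_zero {a : ℝ} (ha : 0 < a) :
    scaledMoment μ W 1 (expSigmoid a) 0 = (∫ ω, W ω ∂μ) * (1 + a)⁻¹ := by
  simp [scaledMoment, expSigmoid_zero ha, integral_mul_const]

lemma Ffun_zero : Ffun μ W q 0 = 0 := by
  simp [Ffun]

lemma pfun_eq (β s : ℝ) :
    pfun μ W q β s = scaledMoment μ W 0 (fun x => log (exp x + (q - 1))) ((exp β - 1) * s)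
      - (exp β - 1) * (∫ ω, W ω ∂μ) / (2 * q) * ((q - 1) * s ^ 2 + 2 * s - 1) := by
  simp only [pfun, scaledMoment, pow_zero, one_mul, mul_right_comm _ _ s, add_sub_assoc]

end Formulas

namespace AdmissibleWeight

variable {Ω : Type*} [MeasurableSpace Ω] {μ : Measure Ω} {W : Ω → ℝ} {q : ℕ}

variable (hW : AdmissibleWeight μ W)
include hW

lemma integral_pos_of_pos {f : Ω → ℝ} (hf : 0 ≤ f) (hfi : Integrable f μ)
    (hpos : ∀ ω, 0 < W ω → 0 < f ω) : 0 < ∫ ω, f ω ∂μ :=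
  integral_pos_of_support_subset hf hfi hW.integral_pos fun ω hω =>
    (hpos ω ((hW.nonneg ω).lt_of_ne (Ne.symm hω))).ne'

lemma integral_mul_sub_one_div_pos (hq : 1 < q) :
    0 < (∫ ω, W ω ∂μ) * (q - 1) / (2 * q) := by
  have : (1 : ℝ) < q := Nat.one_lt_cast.2 hq
  exact div_pos (mul_pos hW.integral_pos (by linarith)) (by linarith)

lemma exp_sub_one_mul_integral_pos (hq : 1 < q) {β : ℝ} (hβ : 0 < β) :
    0 < (exp β - 1) * ((q - 1) * (∫ ω, W ω ∂μ) / q) := by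
  have hq' : (1 : ℝ) < q := Nat.one_lt_cast.2 hq
  have hβ' := add_one_lt_exp hβ.ne'
  exact mul_pos (by linarith) (div_pos (mul_pos (by linarith) hW.integral_pos) (by linarith))

variable [IsFiniteMeasure μ]

lemma integrable_pow {k : ℕ} (hk : k ≤ 3) : Integrable (fun ω => W ω ^ k) μ :=
  integrable_pow_of_le hW.measurable.aestronglyMeasurable hW.nonneg hk hW.integrable_pow_three

lemma integrable : Integrable W μ := by
  simpa using hW.integrable_pow (k := 1) (by norm_num)

lemma hasDerivAt_scaledMoment_log (hq : 1 < q) (t : ℝ) :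
    HasDerivAt (scaledMoment μ W 0 fun x => log (exp x + (q - 1)))
      (scaledMoment μ W 1 (expSigmoid (q - 1)) t) t :=
  hasDerivAt_scaledMoment (hasDerivAt_log_exp_add (sub_pos.2 (Nat.one_lt_cast.2 hq)))
    abs_expSigmoid_le_one hW.measurable.aestronglyMeasurable (hW.integrable_pow (by norm_num))
    (hW.integrable_pow (by norm_num)) t

lemma hasDerivAt_scaledMoment_expSigmoid (a t : ℝ) :
    HasDerivAt (scaledMoment μ W 1 (expSigmoid a)) (scaledMoment μ W 2 (expSigmoidDeriv a) t) t :=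
  hasDerivAt_scaledMoment hasDerivAt_expSigmoid abs_expSigmoidDeriv_le_one
    hW.measurable.aestronglyMeasurable (hW.integrable_pow (by norm_num))
    (hW.integrable_pow (by norm_num)) t

lemma hasDerivAt_scaledMoment_expSigmoidDeriv (a t : ℝ) :
    HasDerivAt (scaledMoment μ W 2 (expSigmoidDeriv a))
      (scaledMoment μ W 3 (expSigmoidDeriv2 a) t) t :=
  hasDerivAt_scaledMoment hasDerivAt_expSigmoidDeriv abs_expSigmoidDeriv2_le_one
    hW.measurable.aestronglyMeasurable (hW.integrable_pow (by norm_num))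
    (hW.integrable_pow (by norm_num)) t

lemma integrable_mul_expSigmoid (a t : ℝ) :
    Integrable (fun ω => W ω ^ 1 * expSigmoid a (t * W ω)) μ :=
  integrable_pow_mul_comp hasDerivAt_expSigmoid abs_expSigmoidDeriv_le_one
    hW.measurable.aestronglyMeasurable (hW.integrable_pow (by norm_num))
    (hW.integrable_pow (by norm_num)) t

lemma integrable_log_exp_add (hq : 1 < q) (t : ℝ) :
    Integrable (fun ω => W ω ^ 0 * log (exp (t * W ω) + (q - 1))) μ :=
  integrable_pow_mul_comp (hasDerivAt_log_exp_add (sub_pos.2 (Nat.one_lt_cast.2 hq)))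
    abs_expSigmoid_le_one hW.measurable.aestronglyMeasurable (hW.integrable_pow (by norm_num))
    (hW.integrable_pow (by norm_num)) t

lemma strictMono_scaledMoment_expSigmoid (a : ℝ) :
    StrictMono (scaledMoment μ W 1 (expSigmoid a)) := by
  refine strictMono_of_deriv_pos fun t => ?_
  rw [(hW.hasDerivAt_scaledMoment_expSigmoid a t).deriv]
  refine hW.integral_pos_of_pos (fun ω => mul_nonneg (sq_nonneg _) (expSigmoidDeriv_pos _).le)
    (integrable_pow_mul_comp hasDerivAt_expSigmoidDeriv abs_expSigmoidDeriv2_le_one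
      hW.measurable.aestronglyMeasurable (hW.integrable_pow (by norm_num))
      (hW.integrable_pow (by norm_num)) t) fun ω hω => ?_
  exact mul_pos (pow_pos hω 2) (expSigmoidDeriv_pos _)

lemma Ffun_eq (hq : 1 < q) (t : ℝ) :
    Ffun μ W q t = (q * scaledMoment μ W 1 (expSigmoid (q - 1)) t - ∫ ω, W ω ∂μ)
      / ((q - 1) * ∫ ω, W ω ∂μ) := by
  have ha : (0 : ℝ) < q - 1 := sub_pos.2 (Nat.one_lt_cast.2 hq)
  have hE := hW.integral_pos.ne'
  calc Ffun μ W q t = ∫ ω, (q * (W ω ^ 1 * expSigmoid (q - 1) (t * W ω)) - W ω)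
        / ((q - 1) * ∫ ω, W ω ∂μ) ∂μ := by
        refine integral_congr_ae (ae_of_all _ fun ω => ?_)
        have he := exp_pos (t * W ω)
        simp only [expSigmoid_eq ha, ← add_sub_assoc]
        generalize exp (t * W ω) = e at he ⊢
        have hd : e + q - 1 ≠ 0 := by rw [add_sub_assoc]; positivity
        field_simp
        ring
    _ = _ := by
        rw [integral_div, integral_sub ((hW.integrable_mul_expSigmoid _ t).const_mul _)
          hW.integrable, integral_const_mul]
        rfl

lemma hasDerivAt_Ffun (hq : 1 < q) (t : ℝ) :
    HasDerivAt (Ffun μ W q)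
      (q * scaledMoment μ W 2 (expSigmoidDeriv (q - 1)) t / ((q - 1) * ∫ ω, W ω ∂μ)) t := by
  rw [show Ffun μ W q = _ from funext (hW.Ffun_eq hq)]
  exact (((hW.hasDerivAt_scaledMoment_expSigmoid _ t).const_mul _).sub_const _).div_const _

lemma continuous_Ffun (hq : 1 < q) : Continuous (Ffun μ W q) :=
  continuous_iff_continuousAt.2 fun t => (hW.hasDerivAt_Ffun hq t).continuousAt

lemma tendsto_Ffun_nhdsGT_zero (hq : 1 < q) : Tendsto (Ffun μ W q) (𝓝[>] 0) (𝓝 0) := by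
  simpa [Ffun_zero] using ((hW.continuous_Ffun hq).tendsto 0).mono_left nhdsWithin_le_nhds

lemma Ffun_lt_one (hq : 1 < q) (t : ℝ) : Ffun μ W q t < 1 := by
  have ha : (0 : ℝ) < q - 1 := sub_pos.2 (Nat.one_lt_cast.2 hq)
  have hlt : scaledMoment μ W 1 (expSigmoid (q - 1)) t < ∫ ω, W ω ∂μ := by
    have h := hW.integral_pos_of_pos (f := fun ω => W ω - W ω ^ 1 * expSigmoid (q - 1) (t * W ω))
      (fun ω => by
        simp only [Pi.zero_apply, pow_one, sub_nonneg]
        exact mul_le_of_le_one_right (hW.nonneg ω) (abs_le.1 (abs_expSigmoid_le_one _)).2)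
      (hW.integrable.sub (hW.integrable_mul_expSigmoid _ t))
      (fun ω hω => by
        simp only [pow_one, sub_pos]
        exact mul_lt_of_lt_one_right hω (sigmoid_lt_one _))
    rw [integral_sub hW.integrable (hW.integrable_mul_expSigmoid _ t)] at h
    exact sub_pos.1 h
  rw [hW.Ffun_eq hq, div_lt_one (mul_pos ha hW.integral_pos)]
  nlinarith [hW.integral_pos]

lemma Ffun_pos (hq : 1 < q) {t : ℝ} (ht : 0 < t) : 0 < Ffun μ W q t := by
  have ha : (0 : ℝ) < q - 1 := sub_pos.2 (Nat.one_lt_cast.2 hq)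
  have h := hW.strictMono_scaledMoment_expSigmoid (q - 1) ht
  rw [scaledMoment_expSigmoid_zero ha, add_sub_cancel] at h
  rw [hW.Ffun_eq hq]
  refine div_pos ?_ (mul_pos ha hW.integral_pos)
  have hq₀ : (0 : ℝ) < q := by linarith
  rw [mul_inv_lt_iff₀ hq₀] at h
  linarith

lemma exists_convexOn_Ffun (hq : 2 < q) : ∃ δ > 0, ConvexOn ℝ (Ioo 0 δ) (Ffun μ W q) := by
  have hq₁ : 1 < q := by omega
  have ha : (1 : ℝ) < q - 1 := by
    have : (2 : ℝ) < q := by exact_mod_cast hq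
    linarith
  have hc : (0 : ℝ) < (q - 1) * ∫ ω, W ω ∂μ := mul_pos (by linarith) hW.integral_pos
  set Φ₂ := scaledMoment μ W 2 (expSigmoidDeriv (q - 1))
  set Φ₃ := scaledMoment μ W 3 (expSigmoidDeriv2 (q - 1))
  have hΦ₃ : 0 < Φ₃ 0 := by
    simp only [Φ₃, scaledMoment, zero_mul, integral_mul_const]
    exact mul_pos (hW.integral_pos_of_pos (fun ω => pow_nonneg (hW.nonneg ω) 3)
      (hW.integrable_pow le_rfl) fun ω hω => pow_pos hω 3) (expSigmoidDeriv2_zero_pos ha)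
  have hcont : Continuous Φ₃ :=
    continuous_scaledMoment (by unfold expSigmoidDeriv2 expSigmoidDeriv expSigmoid; fun_prop)
      abs_expSigmoidDeriv2_le_one hW.measurable.aestronglyMeasurable (hW.integrable_pow le_rfl)
  obtain ⟨δ, hδ, hpos⟩ :=
    Metric.eventually_nhds_iff.1 (hcont.continuousAt.eventually (lt_mem_nhds hΦ₃))
  refine ⟨δ, hδ, convexOn_of_hasDerivWithinAt2_nonneg (convex_Ioo 0 δ)
    (hW.continuous_Ffun hq₁).continuousOn (f'' := fun t => q * Φ₃ t / ((q - 1) * ∫ ω, W ω ∂μ))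
    (fun t _ => (hW.hasDerivAt_Ffun hq₁ t).hasDerivWithinAt)
    (fun t _ => (((hW.hasDerivAt_scaledMoment_expSigmoidDeriv _ t).const_mul _).div_const _
      ).hasDerivWithinAt) fun t ht => ?_⟩
  rw [interior_Ioo] at ht
  have : 0 < Φ₃ t := hpos (by rw [Real.dist_0_eq_abs, abs_of_pos ht.1]; exact ht.2)
  positivity

lemma bddAbove_convexOn_Ffun (hq : 1 < q) :
    BddAbove {s | 0 < s ∧ ConvexOn ℝ (Ioo 0 s) (Ffun μ W q)} := by
  have hF₁ := hW.Ffun_pos hq one_pos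
  refine ⟨1 + (Ffun μ W q 1)⁻¹, fun s ⟨_, hconv⟩ => ?_⟩
  by_contra! hs
  have hx : 1 ≤ 1 + (Ffun μ W q 1)⁻¹ := by simp [hF₁.le]
  have h := hconv.monotoneOn_div_self (hW.tendsto_Ffun_nhdsGT_zero hq)
    ⟨one_pos, by linarith⟩ ⟨by linarith, hs⟩ hx
  simp only at h
  rw [div_one, le_div_iff₀ (by linarith), mul_add, mul_one, mul_inv_cancel₀ hF₁.ne'] at h
  linarith [hW.Ffun_lt_one hq (1 + (Ffun μ W q 1)⁻¹)]

lemma tconv_pos (hq : 2 < q) : 0 < tconv μ W q := by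
  obtain ⟨δ, hδ, hconv⟩ := hW.exists_convexOn_Ffun hq
  exact hδ.trans_le (le_csSup (hW.bddAbove_convexOn_Ffun (by omega)) ⟨hδ, hconv⟩)

lemma hasDerivAt_pfun (hq : 1 < q) (β s : ℝ) :
    HasDerivAt (pfun μ W q β) ((exp β - 1) * ((q - 1) * (∫ ω, W ω ∂μ) / q)
      * (Ffun μ W q ((exp β - 1) * s) - s)) s := by
  have hq₀ : (q : ℝ) ≠ 0 := by positivity
  have ha : (q : ℝ) - 1 ≠ 0 := (sub_pos.2 (Nat.one_lt_cast.2 hq)).ne'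
  have hE := hW.integral_pos.ne'
  rw [show pfun μ W q β = _ from funext (pfun_eq β)]
  refine ((hW.hasDerivAt_scaledMoment_log hq _).comp s ((hasDerivAt_id' s).const_mul _)).sub
    (((((hasDerivAt_pow 2 s).const_mul _).add ((hasDerivAt_id' s).const_mul 2)).sub_const 1
      ).const_mul _) |>.congr_deriv ?_
  rw [hW.Ffun_eq hq]
  field_simp
  ring

lemma Ffun_le_of_isMaxOn (hq : 1 < q) {β s : ℝ} (hβ : 0 < β) (hs : s ∈ Icc 0 1)
    (hmax : IsMaxOn (pfun μ W q β) (Icc 0 1) s) : Ffun μ W q ((exp β - 1) * s) ≤ s := by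
  rcases eq_or_lt_of_le hs.1 with rfl | hs₀
  · simp [Ffun_zero]
  rcases eq_or_lt_of_le hs.2 with rfl | hs₁
  · exact (hW.Ffun_lt_one hq _).le
  have hK := hW.exp_sub_one_mul_integral_pos hq hβ
  have h := (hmax.isLocalMax (Icc_mem_nhds hs₀ hs₁)).hasDerivAt_eq_zero (hW.hasDerivAt_pfun hq β s)
  rw [mul_eq_zero, sub_eq_zero] at h
  exact (h.resolve_left hK.ne').le

lemma exists_lt_Ffun_of_pfun_zero_lt (hq : 1 < q) {β s : ℝ} (hβ : 0 < β) (hs : 0 ≤ s)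
    (h : pfun μ W q β 0 < pfun μ W q β s) : ∃ x ∈ Ioo 0 s, x < Ffun μ W q ((exp β - 1) * x) := by
  by_contra! hF
  have hK := (hW.exp_sub_one_mul_integral_pos hq hβ).le
  have hanti : AntitoneOn (pfun μ W q β) (Icc 0 s) :=
    antitoneOn_of_deriv_nonpos (convex_Icc 0 s)
      (fun x _ => (hW.hasDerivAt_pfun hq β x).continuousAt.continuousWithinAt)
      (fun x _ => (hW.hasDerivAt_pfun hq β x).differentiableAt.differentiableWithinAt)
      fun x hx => by
        rw [interior_Icc] at hx
        rw [(hW.hasDerivAt_pfun hq β x).deriv]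
        exact mul_nonpos_of_nonneg_of_nonpos hK (sub_nonpos.2 (hF x hx))
  exact (hanti ⟨le_rfl, hs⟩ ⟨hs, le_rfl⟩ hs).not_gt h

lemma tconv_div_le_of_isMaxOn (hq : 2 < q) {β s : ℝ} (hβ : 0 < β) (hs : s ∈ Icc 0 1)
    (hmax : IsMaxOn (pfun μ W q β) (Icc 0 1) s) (h₀ : pfun μ W q β 0 < pfun μ W q β s) :
    tconv μ W q / (exp β - 1) ≤ s := by
  have hq₁ : 1 < q := by omega
  have hb : 0 < exp β - 1 := by linarith [add_one_lt_exp hβ.ne']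
  obtain ⟨x, hx, hxF⟩ := hW.exists_lt_Ffun_of_pfun_zero_lt hq₁ hβ hs.1 h₀
  rw [div_le_iff₀ hb]
  by_contra! hlt
  obtain ⟨δ, hδ, hδconv⟩ := hW.exists_convexOn_Ffun hq
  have hlt' : (exp β - 1) * s < sSup {s | 0 < s ∧ ConvexOn ℝ (Ioo 0 s) (Ffun μ W q)} := by
    rw [mul_comm]; exact hlt
  obtain ⟨u, ⟨-, hconv⟩, hu⟩ := exists_lt_of_lt_csSup ⟨δ, (⟨hδ, hδconv⟩ : 0 < δ ∧ _)⟩ hlt'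
  have hratio := hconv.monotoneOn_div_self (hW.tendsto_Ffun_nhdsGT_zero hq₁)
    ⟨mul_pos hb hx.1, (mul_lt_mul_of_pos_left hx.2 hb).trans hu⟩
    ⟨mul_pos hb (hx.1.trans hx.2), hu⟩ (mul_le_mul_of_nonneg_left hx.2.le hb.le)
  simp only at hratio
  rw [div_le_div_iff₀ (mul_pos hb hx.1) (mul_pos hb (hx.1.trans hx.2))] at hratio
  have hFOC := hW.Ffun_le_of_isMaxOn hq₁ hβ hs hmax
  nlinarith [mul_pos hb hx.1, mul_pos hb (hx.1.trans hx.2)]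

end AdmissibleWeight

noncomputable def pressureGap {Ω : Type*} [MeasurableSpace Ω] (μ : Measure Ω) (W : Ω → ℝ)
    (q : ℕ) (s b : ℝ) : ℝ :=
  scaledMoment μ W 0 (fun x => log (exp x + (q - 1))) (b * s) - log q
    - b * ((∫ ω, W ω ∂μ) / (2 * q) * ((q - 1) * s ^ 2 + 2 * s))

noncomputable def subcriticalSet {Ω : Type*} [MeasurableSpace Ω] (μ : Measure Ω) (W : Ω → ℝ)
    (q : ℕ) : Set ℝ :=
  {β | 0 < β ∧ ∀ s ∈ Ioc (0 : ℝ) 1, pfun μ W q β s < pfun μ W q β 0}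

section Pressure

variable {Ω : Type*} [MeasurableSpace Ω] {μ : Measure Ω} {W : Ω → ℝ} {q : ℕ} {β s : ℝ}

lemma isMaxOn_zero_of_mem_subcriticalSet (hβ : β ∈ subcriticalSet μ W q) :
    IsMaxOn (pfun μ W q β) (Icc 0 1) 0 := isMaxOn_iff.2 fun t ht => by
  rcases eq_or_lt_of_le ht.1 with rfl | ht₀
  exacts [le_rfl, (hβ.2 t ⟨ht₀, ht.2⟩).le]

lemma eq_zero_of_mem_subcriticalSet (hβ : β ∈ subcriticalSet μ W q) (hs : s ∈ Icc 0 1)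
    (hmax : IsMaxOn (pfun μ W q β) (Icc 0 1) s) : s = 0 := by
  by_contra hs₀
  exact (hmax (left_mem_Icc.2 zero_le_one)).not_gt
    (hβ.2 s ⟨lt_of_le_of_ne hs.1 (Ne.symm hs₀), hs.2⟩)

variable [IsProbabilityMeasure μ]

lemma pressureGap_zero (s : ℝ) : pressureGap μ W q s 0 = 0 := by
  simp [pressureGap, scaledMoment]

lemma pfun_sub_pfun_zero (β s : ℝ) :
    pfun μ W q β s - pfun μ W q β 0 = pressureGap μ W q s (exp β - 1) := by
  have h₀ : scaledMoment μ W 0 (fun x => log (exp x + (q - 1))) 0 = log q := by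
    simp [scaledMoment]
  rw [pfun_eq, pfun_eq, mul_zero, h₀, pressureGap]
  ring

end Pressure

namespace AdmissibleWeight

variable {Ω : Type*} [MeasurableSpace Ω] {μ : Measure Ω} [IsProbabilityMeasure μ] {W : Ω → ℝ}
  {q : ℕ} (hW : AdmissibleWeight μ W)
include hW

lemma scaledMoment_log_le (hq : 1 < q) {t : ℝ} (ht : 0 ≤ t) :
    scaledMoment μ W 0 (fun x => log (exp x + (q - 1))) t
      ≤ log q + t / q * (∫ ω, W ω ∂μ) + t ^ 2 / 2 * ∫ ω, W ω ^ 2 ∂μ := by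
  have hW₂ := (hW.integrable_pow (k := 2) (by norm_num)).const_mul (t ^ 2 / 2)
  calc scaledMoment μ W 0 (fun x => log (exp x + (q - 1))) t
      ≤ ∫ ω, (log q + t / q * W ω + t ^ 2 / 2 * W ω ^ 2) ∂μ := by
        refine integral_mono (hW.integrable_log_exp_add hq t)
          (((integrable_const _).add (hW.integrable.const_mul _)).add hW₂) fun ω => ?_
        have h := log_exp_add_le (sub_pos.2 (Nat.one_lt_cast.2 hq)) (mul_nonneg ht (hW.nonneg ω))
        simp only [add_sub_cancel] at h
        rw [pow_zero, one_mul]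
        linarith [show t * W ω * (q : ℝ)⁻¹ = t / q * W ω by ring,
          show (t * W ω) ^ 2 / 2 = t ^ 2 / 2 * W ω ^ 2 by ring]
    _ = _ := by
        rw [integral_add (f := fun ω => log q + t / q * W ω)
            ((integrable_const _).add (hW.integrable.const_mul _)) hW₂,
          integral_add (integrable_const _) (hW.integrable.const_mul _), integral_const_mul,
          integral_const_mul]
        simp

lemma le_scaledMoment_log (hq : 1 < q) (t : ℝ) :
    t * ∫ ω, W ω ∂μ ≤ scaledMoment μ W 0 (fun x => log (exp x + (q - 1))) t := by
  rw [← integral_const_mul]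
  refine integral_mono (hW.integrable.const_mul t) (hW.integrable_log_exp_add hq t) fun ω => ?_
  simpa using le_log_exp_add (sub_nonneg.2 (Nat.one_le_cast.2 hq.le)) (t * W ω)

lemma strictConvexOn_pressureGap (hq : 1 < q) {s : ℝ} (hs : 0 < s) :
    StrictConvexOn ℝ univ (pressureGap μ W q s) := by
  set c := (∫ ω, W ω ∂μ) / (2 * q) * ((q - 1) * s ^ 2 + 2 * s)
  have hd : ∀ b, HasDerivAt (pressureGap μ W q s)
      (s * scaledMoment μ W 1 (expSigmoid (q - 1)) (b * s) - c) b := fun b => by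
    have h := (((hW.hasDerivAt_scaledMoment_log hq (b * s)).comp b
      (hasDerivAt_mul_const s)).sub_const (log q)).sub (hasDerivAt_mul_const c)
    exact h.congr_deriv (by ring)
  refine StrictMono.strictConvexOn_univ_of_deriv
    (continuous_iff_continuousAt.2 fun b => (hd b).continuousAt) ?_
  rw [show deriv (pressureGap μ W q s) = _ from funext fun b => (hd b).deriv]
  intro b₁ b₂ hb
  have := hW.strictMono_scaledMoment_expSigmoid (q - 1) (mul_lt_mul_of_pos_right hb hs)
  simp only
  nlinarith

lemma pressureGap_le (hq : 1 < q) {s b : ℝ} (hs : 0 ≤ s) (hb : 0 ≤ b) :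
    pressureGap μ W q s b
      ≤ b * s ^ 2 * (b * (∫ ω, W ω ^ 2 ∂μ) / 2 - (∫ ω, W ω ∂μ) * (q - 1) / (2 * q)) := by
  have h := hW.scaledMoment_log_le hq (mul_nonneg hb hs)
  have hq₀ : (q : ℝ) ≠ 0 := by positivity
  have key : log q + b * s / q * (∫ ω, W ω ∂μ) + (b * s) ^ 2 / 2 * (∫ ω, W ω ^ 2 ∂μ) - log q
      - b * ((∫ ω, W ω ∂μ) / (2 * q) * ((q - 1) * s ^ 2 + 2 * s))
      = b * s ^ 2 * (b * (∫ ω, W ω ^ 2 ∂μ) / 2 - (∫ ω, W ω ∂μ) * (q - 1) / (2 * q)) := by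
    field_simp
    ring
  rw [pressureGap]
  linarith

lemma le_pressureGap_one (hq : 1 < q) (b : ℝ) :
    b * (∫ ω, W ω ∂μ) * (q - 1) / (2 * q) - log q ≤ pressureGap μ W q 1 b := by
  have h := hW.le_scaledMoment_log hq (b * 1)
  have hq₀ : (q : ℝ) ≠ 0 := by positivity
  have key : b * 1 * (∫ ω, W ω ∂μ) - log q
      - b * ((∫ ω, W ω ∂μ) / (2 * q) * ((q - 1) * 1 ^ 2 + 2 * 1))
      = b * (∫ ω, W ω ∂μ) * (q - 1) / (2 * q) - log q := by
    field_simp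
    ring
  rw [pressureGap]
  linarith

lemma pfun_zero_lt_of_lt (hq : 1 < q) {s β₁ β₂ : ℝ} (hs : 0 < s) (hβ₁ : 0 < β₁) (hβ : β₁ < β₂)
    (h : pfun μ W q β₁ 0 ≤ pfun μ W q β₁ s) : pfun μ W q β₂ 0 < pfun μ W q β₂ s := by
  rw [← sub_nonneg, pfun_sub_pfun_zero] at h
  rw [← sub_pos, pfun_sub_pfun_zero]
  exact ((hW.strictConvexOn_pressureGap hq hs).subset (subset_univ _) (convex_Ici 0)
    ).pos_of_lt_of_nonneg (pressureGap_zero s) (by linarith [add_one_lt_exp hβ₁.ne'])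
    (by linarith [exp_lt_exp.2 hβ]) h

lemma mem_subcriticalSet_of_lt (hq : 1 < q) {β β₁ : ℝ} (hβ₁ : β₁ ∈ subcriticalSet μ W q)
    (hβ : 0 < β) (hlt : β < β₁) : β ∈ subcriticalSet μ W q :=
  ⟨hβ, fun s hs => lt_of_not_ge fun hle =>
    (hW.pfun_zero_lt_of_lt hq hs.1 hβ hlt hle).not_gt (hβ₁.2 s hs)⟩

lemma subcriticalSet_nonempty (hq : 1 < q) : (subcriticalSet μ W q).Nonempty := by
  have hc := hW.integral_mul_sub_one_div_pos hq
  obtain ⟨b, hb, hbc⟩ := exists_pos_mul_lt hc ((∫ ω, W ω ^ 2 ∂μ) / 2)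
  refine ⟨log (1 + b), log_pos (by linarith), fun s hs => ?_⟩
  rw [← sub_neg, pfun_sub_pfun_zero, exp_log (by linarith), add_sub_cancel_left]
  calc pressureGap μ W q s b
      ≤ b * s ^ 2 * (b * (∫ ω, W ω ^ 2 ∂μ) / 2 - (∫ ω, W ω ∂μ) * (q - 1) / (2 * q)) :=
        hW.pressureGap_le hq hs.1.le hb.le
    _ < 0 := mul_neg_of_pos_of_neg (by have := hs.1; positivity) (by linarith)

lemma bddAbove_subcriticalSet (hq : 1 < q) : BddAbove (subcriticalSet μ W q) := by
  have hc := hW.integral_mul_sub_one_div_pos hq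
  refine ⟨log q / ((∫ ω, W ω ∂μ) * (q - 1) / (2 * q)), fun β ⟨_, hsub⟩ => ?_⟩
  have h := hsub 1 ⟨one_pos, le_rfl⟩
  rw [← sub_neg, pfun_sub_pfun_zero] at h
  have h' := hW.le_pressureGap_one hq (exp β - 1)
  rw [le_div_iff₀ hc]
  have hlt : (exp β - 1) * ((∫ ω, W ω ∂μ) * (q - 1) / (2 * q)) < log q := by
    rw [← mul_div_assoc, ← mul_assoc]
    linarith
  nlinarith [add_one_le_exp β]

lemma exists_pfun_zero_lt_of_csSup_lt (hq : 1 < q) {β : ℝ}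
    (hβ : sSup (subcriticalSet μ W q) < β) : ∃ s ∈ Icc 0 1, pfun μ W q β 0 < pfun μ W q β s := by
  obtain ⟨β₀, hβ₀⟩ := hW.subcriticalSet_nonempty hq
  have hpos := hβ₀.1.trans_le (le_csSup (hW.bddAbove_subcriticalSet hq) hβ₀)
  obtain ⟨β₁, hβc, hβ₁⟩ := exists_between hβ
  obtain ⟨s, hs, hle⟩ : ∃ s ∈ Ioc (0 : ℝ) 1, pfun μ W q β₁ 0 ≤ pfun μ W q β₁ s := by
    by_contra! h
    exact (le_csSup (hW.bddAbove_subcriticalSet hq) ⟨hpos.trans hβc, h⟩).not_gt hβc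
  exact ⟨s, Ioc_subset_Icc_self hs, hW.pfun_zero_lt_of_lt hq hs.1 (hpos.trans hβc) hβ₁ hle⟩

end AdmissibleWeight

theorem general_first_order_phase_transition_general
    {Ω : Type*} [MeasurableSpace Ω] (μ : Measure Ω) [IsProbabilityMeasure μ]
    (W : Ω → ℝ) (hWmeas : Measurable W) (hWnn : ∀ ω, 0 ≤ W ω)
    (hEW : 0 < ∫ ω, W ω ∂μ)
    (hW3 : Integrable (fun ω => (W ω) ^ 3) μ)
    (q : ℕ) (hq : 3 ≤ q) :
    0 < tconv μ W q ∧
    ∃ βc : ℝ, 0 < βc ∧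
      (∀ β : ℝ, 0 < β → β < βc →
        (∀ t ∈ Icc (0 : ℝ) 1, pfun μ W q β t ≤ pfun μ W q β 0) ∧
        (∀ s ∈ Icc (0 : ℝ) 1,
          (∀ t ∈ Icc (0 : ℝ) 1, pfun μ W q β t ≤ pfun μ W q β s) → s = 0)) ∧
      (∀ β : ℝ, βc < β → ∀ s ∈ Icc (0 : ℝ) 1,
        (∀ t ∈ Icc (0 : ℝ) 1, pfun μ W q β t ≤ pfun μ W q β s) →
        tconv μ W q / (Real.exp β - 1) ≤ s) := by
  have hW : AdmissibleWeight μ W := ⟨hWmeas, hWnn, hW3, hEW⟩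
  have hq₁ : 1 < q := by omega
  obtain ⟨β₀, hβ₀⟩ := hW.subcriticalSet_nonempty hq₁
  have hβc : 0 < sSup (subcriticalSet μ W q) :=
    hβ₀.1.trans_le (le_csSup (hW.bddAbove_subcriticalSet hq₁) hβ₀)
  refine ⟨hW.tconv_pos hq, sSup (subcriticalSet μ W q), hβc, fun β hβ hlt => ?_,
    fun β hlt s hs hmax => ?_⟩
  · obtain ⟨β₁, hβ₁, hββ₁⟩ := exists_lt_of_lt_csSup ⟨β₀, hβ₀⟩ hlt
    have hsub := hW.mem_subcriticalSet_of_lt hq₁ hβ₁ hβ hββ₁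
    exact ⟨isMaxOn_iff.1 (isMaxOn_zero_of_mem_subcriticalSet hsub),
      fun s hs hmax => eq_zero_of_mem_subcriticalSet hsub hs hmax⟩
  · obtain ⟨s₁, hs₁, hlt₁⟩ := hW.exists_pfun_zero_lt_of_csSup_lt hq₁ hlt
    exact hW.tconv_div_le_of_isMaxOn hq (hβc.trans hlt) hs hmax (hlt₁.trans_le (hmax s₁ hs₁))

/-- **General first-order phase transition** when `E[W³] < ∞` and `q ≥ 3`, in zero
field: `t_conv > 0`, and there is a critical value `β_c ∈ (0,∞)` such that for
`β < β_c` the unique maximizer of `p_{β,0}` on `[0,1]` is `s = 0`, while for `β > β_c`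
every maximizer satisfies `s ≥ t_conv/β' > 0`; thus the optimal value jumps at `β_c`. -/
theorem general_first_order_phase_transition
    {Ω : Type*} [MeasurableSpace Ω] (μ : Measure Ω) [IsProbabilityMeasure μ]
    (W : Ω → ℝ) (hWmeas : Measurable W) (hWnn : ∀ ω, 0 ≤ W ω)
    (hWint : Integrable W μ) (hEW : 0 < ∫ ω, W ω ∂μ)
    (hW3 : Integrable (fun ω => (W ω) ^ 3) μ)
    (q : ℕ) (hq : 3 ≤ q) :
    0 < tconv μ W q ∧
    ∃ βc : ℝ, 0 < βc ∧
      (∀ β : ℝ, 0 < β → β < βc →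
        (∀ t ∈ Icc (0 : ℝ) 1, pfun μ W q β t ≤ pfun μ W q β 0) ∧
        (∀ s ∈ Icc (0 : ℝ) 1,
          (∀ t ∈ Icc (0 : ℝ) 1, pfun μ W q β t ≤ pfun μ W q β s) → s = 0)) ∧
      (∀ β : ℝ, βc < β → ∀ s ∈ Icc (0 : ℝ) 1,
        (∀ t ∈ Icc (0 : ℝ) 1, pfun μ W q β t ≤ pfun μ W q β s) →
        tconv μ W q / (Real.exp β - 1) ≤ s) :=
  general_first_order_phase_transition_general μ W hWmeas hWnn hEW hW3 q hq
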